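/- arXiv:2312.15693 — 3 statements merged into one kernel-verified Lean document; each statement's English description precedes it below -/
import Mathlib

section
/- For all θ, θ' ∈ (0, π/2), |cos(θ') − cos(θ)| ≥ (1/π)·|θ² − θ'²|. -/
open Real Set

/-- Jordan's inequality `2x/π ≤ sin x` is exactly the sign of the derivative. -/
theorem antitoneOn_cos_add_sq_div_pi :
    AntitoneOn (fun x : ℝ => cos x + x ^ 2 / π) (Icc 0 (π / 2)) := by
  have hderiv (x : ℝ) : HasDerivAt (fun x : ℝ => cos x + x ^ 2 / π) (-sin x + 2 * x / π) x := by
    simpa using (hasDerivAt_id x).cos.fun_add (((hasDerivAt_id x).pow 2).div_const π)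
  refine antitoneOn_of_deriv_nonpos (convex_Icc _ _) (by fun_prop) (by fun_prop) fun x hx => ?_
  rw [interior_Icc] at hx
  rw [(hderiv x).deriv, neg_add_nonpos_iff, mul_div_right_comm]
  exact mul_le_sin hx.1.le hx.2.le

theorem sq_sub_sq_div_pi_le_cos_sub_cos {θ θ' : ℝ} (h₀ : 0 ≤ θ) (h : θ ≤ θ') (h' : θ' ≤ π / 2) :
    (θ' ^ 2 - θ ^ 2) / π ≤ cos θ - cos θ' := by
  have hanti := antitoneOn_cos_add_sq_div_pi ⟨h₀, h.trans h'⟩ ⟨h₀.trans h, h'⟩ h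
  dsimp only at hanti
  rw [sub_div]
  linarith

/-- For `θ, θ' ∈ (0, π/2)`, `|cos θ' − cos θ| ≥ (1/π)·|θ² − θ'²|`. -/
theorem abs_cos_sub_cos_ge (θ θ' : ℝ) (hθ : θ ∈ Set.Ioo 0 (Real.pi / 2))
    (hθ' : θ' ∈ Set.Ioo 0 (Real.pi / 2)) :
    |Real.cos θ' - Real.cos θ| ≥ (1 / Real.pi) * |θ ^ 2 - θ' ^ 2| := by
  wlog h : θ ≤ θ' generalizing θ θ'
  · rw [abs_sub_comm, abs_sub_comm (θ ^ 2)]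
    exact this θ' θ hθ' hθ (le_of_not_ge h)
  have hsq : θ ^ 2 ≤ θ' ^ 2 := pow_le_pow_left₀ hθ.1.le h 2
  have key := sq_sub_sq_div_pi_le_cos_sub_cos hθ.1.le h hθ'.2.le
  have hnonneg : 0 ≤ (θ' ^ 2 - θ ^ 2) / π := div_nonneg (sub_nonneg.2 hsq) pi_pos.le
  rw [abs_sub_comm, abs_of_nonneg (by linarith), abs_sub_comm, abs_of_nonneg (sub_nonneg.2 hsq),
    one_div_mul_eq_div]
  exact key
end

section
/- Let n ≥ 3 be odd and let λ_j = (1+2cos(2πj/n))/3 for 0 ≤ j ≤ (n-1)/2. Then ∑_{j=0}^{(n-1)/2} ∑_{k=0, λ_k≠λ_j}^{(n-1)/2} 1/|λ_j − λ_k| ≤ (8n·log(n)/π)². -/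
/-!
Since `λ_j - λ_k = (4/3) sin (π(j+k)/n) sin (π(k-j)/n)`, every gap is a product of two values
`sin (π r/n)` with `0 < r < n`, and Jordan's inequality at the nearer end of `(0, π)` gives
`1 / sin (π r/n) ≤ (n/2) (1/r + 1/(n-r))`, whence `∑_{0<r<n} 1 / sin (π r/n) ≤ n (1 + log n)`.
For odd `n`, the ordered pair `(j, k)` of distinct indices `≤ (n-1)/2` is recovered from
`j + k` and the residue of `k - j` mod `n`, so the double sum is at most
`(3/4) (∑_{0<r<n} 1 / sin (π r/n))² ≤ (3/4) n² (1 + log n)²`, and `1 ≤ log n` for `n ≥ 3`.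
-/
open Real Finset

lemma inv_sin_le_of_mem_Ioo {x : ℝ} (hx0 : 0 < x) (hxπ : x < π) :
    (sin x)⁻¹ ≤ π / 2 * (x⁻¹ + (π - x)⁻¹) := by
  have jordan : ∀ y, 0 < y → y ≤ π / 2 → sin y = sin x → (sin x)⁻¹ ≤ π / 2 * y⁻¹ := by
    intro y hy0 hy hsin
    rw [← hsin]
    calc (sin y)⁻¹ ≤ (2 / π * y)⁻¹ := inv_anti₀ (by positivity) (mul_le_sin hy0.le hy)
      _ = π / 2 * y⁻¹ := by rw [mul_inv, inv_div]
  have hx0' : 0 ≤ x⁻¹ := inv_nonneg.2 hx0.le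
  have hxπ' : 0 ≤ (π - x)⁻¹ := inv_nonneg.2 (by linarith)
  rcases le_total x (π / 2) with h | h
  · grw [jordan x hx0 h rfl, ← le_add_of_nonneg_right hxπ']
  · grw [jordan (π - x) (by linarith) (by linarith) (sin_pi_sub x),
      ← le_add_of_nonneg_left hx0']

lemma inv_abs_sin_pi_mul_div_le {n r : ℕ} (hr0 : 0 < r) (hrn : r < n) :
    |sin (π * r / n)|⁻¹ ≤ n / 2 * ((r : ℝ)⁻¹ + ((n - r : ℕ) : ℝ)⁻¹) := by
  have hr : (0 : ℝ) < r := by exact_mod_cast hr0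
  have hrn' : (r : ℝ) < n := by exact_mod_cast hrn
  have hn : (0 : ℝ) < n := hr.trans hrn'
  have hx0 : 0 < π * r / n := by positivity
  have hxπ : π * r / n < π := by
    rw [div_lt_iff₀ (by linarith), mul_lt_mul_iff_right₀ pi_pos]; exact hrn'
  rw [abs_of_pos (sin_pos_of_pos_of_lt_pi hx0 hxπ)]
  convert inv_sin_le_of_mem_Ioo hx0 hxπ using 1
  rw [Nat.cast_sub hrn.le, show π - π * r / n = π * (n - r) / n by field_simp]
  have : (n : ℝ) - r ≠ 0 := by linarith
  field_simp

lemma sum_Ioo_inv_le_one_add_log (n : ℕ) : ∑ r ∈ Ioo 0 n, (r : ℝ)⁻¹ ≤ 1 + log n := by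
  calc ∑ r ∈ Ioo 0 n, (r : ℝ)⁻¹ ≤ ∑ r ∈ Icc 1 n, (r : ℝ)⁻¹ :=
        sum_le_sum_of_subset_of_nonneg (fun r hr => by simp only [mem_Ioo, mem_Icc] at hr ⊢; omega)
          (fun _ _ _ => by positivity)
    _ = harmonic n := by simp [harmonic_eq_sum_Icc]
    _ ≤ 1 + log n := harmonic_le_one_add_log n

lemma sum_Ioo_inv_abs_sin_pi_mul_div_le (n : ℕ) :
    ∑ r ∈ Ioo 0 n, |sin (π * r / n)|⁻¹ ≤ n * (1 + log n) := by
  have reflect : ∑ r ∈ Ioo 0 n, ((n - r : ℕ) : ℝ)⁻¹ = ∑ r ∈ Ioo 0 n, (r : ℝ)⁻¹ :=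
    sum_nbij' (n - ·) (n - ·) (fun r hr => by rw [mem_Ioo] at hr ⊢; omega)
      (fun r hr => by rw [mem_Ioo] at hr ⊢; omega) (fun r hr => by rw [mem_Ioo] at hr; omega)
      (fun r hr => by rw [mem_Ioo] at hr; omega) (fun _ _ => rfl)
  calc ∑ r ∈ Ioo 0 n, |sin (π * r / n)|⁻¹
      ≤ ∑ r ∈ Ioo 0 n, n / 2 * ((r : ℝ)⁻¹ + ((n - r : ℕ) : ℝ)⁻¹) :=
        sum_le_sum fun r hr => by
          rw [mem_Ioo] at hr; exact inv_abs_sin_pi_mul_div_le hr.1 hr.2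
    _ = n * ∑ r ∈ Ioo 0 n, (r : ℝ)⁻¹ := by
        rw [← mul_sum, sum_add_distrib, reflect]; ring
    _ ≤ n * (1 + log n) := by gcongr; exact sum_Ioo_inv_le_one_add_log n

lemma sub_eq_mul_sin_add_mul_sin_sub (x y : ℝ) :
    (1 + 2 * cos (2 * x)) / 3 - (1 + 2 * cos (2 * y)) / 3 = 4 / 3 * sin (x + y) * sin (y - x) := by
  have h := cos_sub_cos (2 * x) (2 * y)
  rw [show (2 * x + 2 * y) / 2 = x + y by ring, show (2 * x - 2 * y) / 2 = -(y - x) by ring,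
    sin_neg] at h
  linear_combination (2 / 3) * h

/-- The residue of `k - j` modulo `n`, when `j, k < n`. -/
def cyclicSub (n j k : ℕ) : ℕ := if j < k then k - j else n + k - j

lemma abs_sin_pi_mul_cyclicSub_div {n j k : ℕ} (hn : n ≠ 0) (hj : j ≤ n) :
    |sin (π * cyclicSub n j k / n)| = |sin (π * ((k : ℝ) - j) / n)| := by
  unfold cyclicSub
  split_ifs with hjk
  · rw [Nat.cast_sub hjk.le]
  · rw [Nat.cast_sub (by omega), Nat.cast_add,
      show π * ((n : ℝ) + k - j) / n = π * ((k : ℝ) - j) / n + π by field_simp; ring,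
      sin_add_pi, abs_neg]

lemma inv_abs_sub_eq {n : ℕ} (hn : n ≠ 0) {lam : ℕ → ℝ}
    (hlam : ∀ j, lam j = (1 + 2 * cos (2 * π * j / n)) / 3) {j k : ℕ} (hj : j ≤ n) :
    |lam j - lam k|⁻¹ =
      3 / 4 * (|sin (π * (j + k : ℕ) / n)|⁻¹ * |sin (π * cyclicSub n j k / n)|⁻¹) := by
  have hadd : π * j / n + π * k / n = π * (j + k : ℕ) / n := by push_cast; ring
  have hsub : π * k / n - π * j / n = π * ((k : ℝ) - j) / n := by ring
  rw [hlam, hlam, show 2 * π * j / n = 2 * (π * j / n) by ring,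
    show 2 * π * k / n = 2 * (π * k / n) by ring, sub_eq_mul_sin_add_mul_sin_sub, hadd, hsub,
    abs_mul, abs_mul, ← abs_sin_pi_mul_cyclicSub_div hn hj, mul_inv, mul_inv, mul_assoc,
    abs_of_pos (by norm_num : (0 : ℝ) < 4 / 3), inv_div]

lemma injOn_add_cyclicSub {n : ℕ} (hn : Odd n) :
    Set.InjOn (fun p : ℕ × ℕ => (p.1 + p.2, cyclicSub n p.1 p.2))
      (range ((n - 1) / 2 + 1)).offDiag := by
  obtain ⟨m, rfl⟩ := hn
  rintro ⟨j, k⟩ hjk ⟨j', k'⟩ hjk' h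
  simp only [coe_offDiag, Set.mem_offDiag, coe_range, Set.mem_Iio, Prod.mk.injEq,
    cyclicSub] at hjk hjk' h ⊢
  split_ifs at h <;> omega

lemma image_add_cyclicSub_subset {n : ℕ} (hn : Odd n) :
    (range ((n - 1) / 2 + 1)).offDiag.image (fun p : ℕ × ℕ => (p.1 + p.2, cyclicSub n p.1 p.2))
      ⊆ Ioo 0 n ×ˢ Ioo 0 n := by
  obtain ⟨m, rfl⟩ := hn
  intro q hq
  simp only [mem_image, mem_offDiag, mem_range, Prod.exists] at hq
  obtain ⟨j, k, hjk, rfl⟩ := hq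
  simp only [mem_product, mem_Ioo, cyclicSub]
  split_ifs <;> omega

lemma three_div_four_mul_sq_le {n : ℕ} (hn : 3 ≤ n) :
    3 / 4 * (n * (1 + log n)) ^ 2 ≤ (8 * n * log n / π) ^ 2 := by
  have hlog : 1 ≤ log n := by
    rw [le_log_iff_exp_le (by positivity)]
    exact (exp_one_lt_d9.trans (by norm_num : (2.7182818286 : ℝ) < 3)).le.trans
      (by exact_mod_cast hn)
  have hπ : 2 ≤ 8 / π := by rw [le_div_iff₀ pi_pos]; linarith [pi_le_four]
  calc 3 / 4 * (n * (1 + log n)) ^ 2 ≤ 3 / 4 * (n * (2 * log n)) ^ 2 := by gcongr; linarith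
    _ = 3 * (n * log n) ^ 2 := by ring
    _ ≤ (8 / π) ^ 2 * (n * log n) ^ 2 := by gcongr; nlinarith
    _ = (8 * n * log n / π) ^ 2 := by ring

/-- For odd `n ≥ 3` and `λ_j = (1 + 2cos(2πj/n))/3`, the sum of reciprocals of
distinct eigenvalue gaps satisfies
`∑_{j=0}^{(n-1)/2} ∑_{k : λ_k ≠ λ_j} 1/|λ_j − λ_k| ≤ (8n·log n/π)²`. -/
theorem sum_inv_eigenvalue_gaps_le (n : ℕ) (hn : 3 ≤ n) (hodd : Odd n)
    (lam : ℕ → ℝ) (hlam : ∀ j, lam j = (1 + 2 * Real.cos (2 * Real.pi * j / n)) / 3) :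
    ∑ j ∈ Finset.range ((n - 1) / 2 + 1),
      ∑ k ∈ (Finset.range ((n - 1) / 2 + 1)).filter (fun k => lam k ≠ lam j),
        1 / |lam j - lam k| ≤ (8 * n * Real.log n / Real.pi) ^ 2 := by
  set R := range ((n - 1) / 2 + 1)
  let e : ℕ × ℕ → ℕ × ℕ := fun p => (p.1 + p.2, cyclicSub n p.1 p.2)
  let g : ℕ × ℕ → ℝ := fun q => |sin (π * q.1 / n)|⁻¹ * |sin (π * q.2 / n)|⁻¹
  calc _ ≤ ∑ j ∈ R, ∑ k ∈ R.filter (· ≠ j), 1 / |lam j - lam k| :=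
        sum_le_sum fun j _ => sum_le_sum_of_subset_of_nonneg
          (monotone_filter_right R fun k _ hk hkj => hk (congrArg lam hkj))
          fun _ _ _ => by positivity
    _ = ∑ p ∈ R.offDiag, 3 / 4 * g (e p) := by
        rw [← sum_finset_product' R.offDiag R (fun j => R.filter (· ≠ j))
          (fun p => by simp [mem_offDiag, ne_comm])]
        refine sum_congr rfl fun p hp => ?_
        simp only [mem_offDiag, mem_range, R] at hp
        rw [one_div, inv_abs_sub_eq (by omega) hlam (by omega)]
    _ = 3 / 4 * ∑ q ∈ R.offDiag.image e, g q := by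
        rw [sum_image (injOn_add_cyclicSub hodd), mul_sum]
    _ ≤ 3 / 4 * ∑ q ∈ Ioo 0 n ×ˢ Ioo 0 n, g q := by
        gcongr
        exact image_add_cyclicSub_subset hodd
    _ = 3 / 4 * (∑ r ∈ Ioo 0 n, |sin (π * r / n)|⁻¹) ^ 2 := by rw [sq, sum_mul_sum, sum_product]
    _ ≤ 3 / 4 * (n * (1 + log n)) ^ 2 := by
        gcongr
        exact sum_Ioo_inv_abs_sin_pi_mul_div_le n
    _ ≤ _ := three_div_four_mul_sq_le hn
end

section
/- Let n ≥ 3 be odd. Then (3/2)·∑_{j=0}^{⌊n/4⌋} ∑_{k=0}^{⌊n/4⌋} 1/|cos(2πj/n) − cos(2πk/n) + 1| ≤ (3/8)·n²·log(n). -/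
open Real Finset

/-- The denominator is bounded below by `(n-4j)/n`. -/
lemma Su1_denom_lb (n j k : ℕ) (hn : 3 ≤ n) (hodd : Odd n) (hj : j ≤ n / 4) :
    ((n : ℝ) - 4 * j) / n ≤
      Real.cos (2 * Real.pi * j / n) - Real.cos (2 * Real.pi * k / n) + 1 := by
  have hn0 : (0 : ℝ) < n := by positivity
  have h4j : 4 * j ≤ n := by
    calc 4 * j ≤ 4 * (n / 4) := by omega
    _ ≤ n := Nat.mul_div_le n 4
  have h4jr : (4 : ℝ) * j ≤ n := by exact_mod_cast h4j
  have ha0 : 0 ≤ 2 * Real.pi * j / n := by positivity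
  have ha : 2 * Real.pi * j / n ≤ Real.pi / 2 := by
    rw [div_le_iff₀ hn0]
    nlinarith [Real.pi_pos]
  have hcos := Real.one_sub_mul_le_cos ha0 ha
  have hkey : ((n : ℝ) - 4 * j) / n ≤ Real.cos (2 * Real.pi * j / n) := by
    have : 1 - 2 / Real.pi * (2 * Real.pi * j / n) = ((n : ℝ) - 4 * j) / n := by
      field_simp
      ring
    linarith [this ▸ hcos]
  have hcb : Real.cos (2 * Real.pi * k / n) ≤ 1 := Real.cos_le_one _
  linarith

/-- Each term of the double sum is at most `n/(n-4j)`. -/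
lemma Su1_term_bound (n j k : ℕ) (hn : 3 ≤ n) (hodd : Odd n) (hj : j ≤ n / 4) :
    1 / |Real.cos (2 * Real.pi * j / n) - Real.cos (2 * Real.pi * k / n) + 1| ≤
      (n : ℝ) / ((n : ℝ) - 4 * j) := by
  have hn0 : (0 : ℝ) < n := by positivity
  have h4j : 4 * j + 1 ≤ n := by
    have h1 : 4 * j ≤ 4 * (n / 4) := by omega
    have h2 : 4 * (n / 4) ≤ n := Nat.mul_div_le n 4
    rcases hodd with ⟨m, hm⟩
    omega
  have h4jr : (4 : ℝ) * j + 1 ≤ n := by exact_mod_cast h4j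
  have hpos : (0 : ℝ) < ((n : ℝ) - 4 * j) / n := by
    apply div_pos (by linarith) hn0
  have hlb := Su1_denom_lb n j k hn hodd hj
  have hdpos : 0 < Real.cos (2 * Real.pi * j / n) - Real.cos (2 * Real.pi * k / n) + 1 :=
    lt_of_lt_of_le hpos hlb
  rw [abs_of_pos hdpos]
  rw [div_le_div_iff₀ hdpos (by linarith)]
  calc 1 * ((n : ℝ) - 4 * j) = (((n : ℝ) - 4 * j) / n) * n := by field_simp
  _ ≤ (Real.cos (2 * Real.pi * j / n) - Real.cos (2 * Real.pi * k / n) + 1) * n := by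
      apply mul_le_mul_of_nonneg_right hlb hn0.le
  _ = (n : ℝ) * (Real.cos (2 * Real.pi * j / n) - Real.cos (2 * Real.pi * k / n) + 1) :=
      mul_comm _ _

/-- Key numeric inequality for large odd `n`. -/
lemma Su1_numeric (n : ℕ) (hn : 9 ≤ n) (hodd : Odd n) :
    ((n / 4 : ℕ) + 1 : ℝ) * (5 + Real.log (n / 4 : ℕ)) ≤ n * Real.log n := by
  set q : ℕ := n / 4 with hq
  have hq2 : 2 ≤ q := by omega
  have h4q : 4 * q + 1 ≤ n := by
    have h2 : 4 * (n / 4) ≤ n := Nat.mul_div_le n 4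
    rcases hodd with ⟨m, hm⟩
    omega
  have hqr : (4 : ℝ) * q + 1 ≤ n := by exact_mod_cast h4q
  have hnr : (9 : ℝ) ≤ n := by exact_mod_cast hn
  have hqpos : (0 : ℝ) < q := by positivity
  have hlogq0 : 0 ≤ Real.log q := Real.log_nonneg (by exact_mod_cast (show 1 ≤ q by omega))
  -- log q ≤ log n - 2 log 2
  have hlogq : Real.log q ≤ Real.log n - 2 * Real.log 2 := by
    have h1 : (q : ℝ) ≤ n / 4 := by linarith
    have h2 : Real.log q ≤ Real.log ((n : ℝ) / 4) := Real.log_le_log hqpos h1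
    have h3 : Real.log ((n : ℝ) / 4) = Real.log n - Real.log 4 := by
      rw [Real.log_div (by linarith) (by norm_num)]
    have h4 : Real.log (4 : ℝ) = 2 * Real.log 2 := by
      rw [show (4 : ℝ) = 2 ^ 2 by norm_num, Real.log_pow]
      push_cast; ring
    rw [h3, h4] at h2
    exact h2
  -- log n ≥ 2
  have hlogn : (2 : ℝ) ≤ Real.log n := by
    have h9 : Real.log 9 ≤ Real.log n := Real.log_le_log (by norm_num) (by exact_mod_cast hn)
    have : (2 : ℝ) ≤ Real.log 9 := by
      rw [show (2 : ℝ) = Real.log (Real.exp 2) by rw [Real.log_exp]]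
      apply Real.log_le_log (Real.exp_pos _)
      have := Real.exp_one_lt_d9
      calc Real.exp 2 = Real.exp 1 ^ 2 := by rw [← Real.exp_nat_mul]; norm_num
      _ ≤ 2.7182818286 ^ 2 := by nlinarith [Real.exp_pos 1]
      _ ≤ 9 := by norm_num
    linarith
  have hlog2 : (0.6931471803 : ℝ) < Real.log 2 := Real.log_two_gt_d9
  have hlog2' : Real.log 2 < 0.6931471808 := Real.log_two_lt_d9
  set L := Real.log n with hL
  -- goal : (q+1)(5 + log q) ≤ n L
  have step1 : ((q : ℝ) + 1) * (5 + Real.log q) ≤ ((n : ℝ) + 3) / 4 * (5 - 2 * Real.log 2 + L) := by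
    apply mul_le_mul (by linarith) (by linarith) (by linarith) (by linarith)
  have step2 : ((n : ℝ) + 3) / 4 * (5 - 2 * Real.log 2 + L) ≤ n * L := by
    nlinarith [mul_le_mul_of_nonneg_left hlogn (show (0:ℝ) ≤ 3 * n - 3 by linarith)]
  linarith

/-- Harmonic-type bound: `∑_{j=0}^{q} 1/(n-4j) ≤ 5/4 + log(q)/4` for odd `n ≥ 9`. -/
lemma Su1_Hsum_bound (n : ℕ) (hn : 9 ≤ n) (hodd : Odd n) :
    ∑ j ∈ Finset.range (n / 4 + 1), 1 / ((n : ℝ) - 4 * j) ≤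
      5 / 4 + Real.log (n / 4 : ℕ) / 4 := by
  set q : ℕ := n / 4 with hq
  have hq2 : 2 ≤ q := by omega
  have h4q : 4 * q + 1 ≤ n := by
    have h2 : 4 * (n / 4) ≤ n := Nat.mul_div_le n 4
    rcases hodd with ⟨m, hm⟩
    omega
  have hqr : (4 : ℝ) * q + 1 ≤ n := by exact_mod_cast h4q
  have hrefl : ∑ j ∈ Finset.range (q + 1), 1 / ((n : ℝ) - 4 * j)
      = ∑ i ∈ Finset.range (q + 1), 1 / ((n : ℝ) - 4 * ((q - i : ℕ) : ℝ)) := by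
    rw [← Finset.sum_range_reflect (fun j => 1 / ((n : ℝ) - 4 * (j : ℝ))) (q + 1)]
    apply Finset.sum_congr rfl
    intro i hi
    norm_num
  rw [hrefl, Finset.sum_range_succ']
  have h0 : 1 / ((n : ℝ) - 4 * ((q - 0 : ℕ) : ℝ)) ≤ 1 := by
    rw [Nat.sub_zero]
    rw [div_le_one (by linarith)]
    linarith
  have hrest : ∑ i ∈ Finset.range q, 1 / ((n : ℝ) - 4 * ((q - (i + 1) : ℕ) : ℝ))
      ≤ (harmonic q : ℝ) / 4 := by
    rw [harmonic, div_eq_mul_inv, mul_comm]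
    push_cast
    rw [Finset.mul_sum]
    apply Finset.sum_le_sum
    intro i hi
    have hi' : i + 1 ≤ q := Finset.mem_range.mp hi
    have hc : ((q - (i + 1) : ℕ) : ℝ) = (q : ℝ) - (i + 1) := by
      push_cast [Nat.cast_sub hi']
      ring
    rw [hc]
    have hd : (0 : ℝ) < 4 * ((i : ℝ) + 1) := by positivity
    have hd2 : 4 * ((i : ℝ) + 1) ≤ (n : ℝ) - 4 * ((q : ℝ) - (i + 1)) := by
      nlinarith
    calc 1 / ((n : ℝ) - 4 * ((q : ℝ) - ((i : ℝ) + 1))) ≤ 1 / (4 * ((i : ℝ) + 1)) := by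
          apply one_div_le_one_div_of_le hd hd2
    _ = 4⁻¹ * ((i : ℝ) + 1)⁻¹ := by
          rw [one_div, mul_inv]
  have hharm : (harmonic q : ℝ) ≤ 1 + Real.log q := harmonic_le_one_add_log q
  have := hrest.trans (by linarith : (harmonic q : ℝ) / 4 ≤ (1 + Real.log q) / 4)
  linarith

/-- Bound on `Su₁`: for odd `n ≥ 3`,
`(3/2)·∑_{j=0}^{⌊n/4⌋} ∑_{k=0}^{⌊n/4⌋} 1/|cos(2πj/n) − cos(2πk/n) + 1| ≤ (3/8)·n²·log n`. -/
theorem Su1_bound (n : ℕ) (hn : 3 ≤ n) (hodd : Odd n) :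
    (3 / 2) * ∑ j ∈ Finset.range (n / 4 + 1), ∑ k ∈ Finset.range (n / 4 + 1),
        1 / |Real.cos (2 * Real.pi * j / n) - Real.cos (2 * Real.pi * k / n) + 1| ≤
      (3 / 8) * n ^ 2 * Real.log n := by
  have hn0 : (0 : ℝ) < n := by positivity
  have hS : ∑ j ∈ Finset.range (n / 4 + 1), ∑ k ∈ Finset.range (n / 4 + 1),
        1 / |Real.cos (2 * Real.pi * j / n) - Real.cos (2 * Real.pi * k / n) + 1| ≤
      ((n / 4 : ℕ) + 1 : ℝ) * ∑ j ∈ Finset.range (n / 4 + 1), (n : ℝ) / ((n : ℝ) - 4 * j) := by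
    rw [Finset.mul_sum]
    apply Finset.sum_le_sum
    intro j hj
    have hj' : j ≤ n / 4 := by
      have := Finset.mem_range.mp hj
      omega
    calc ∑ k ∈ Finset.range (n / 4 + 1),
          1 / |Real.cos (2 * Real.pi * j / n) - Real.cos (2 * Real.pi * k / n) + 1|
        ≤ ∑ _k ∈ Finset.range (n / 4 + 1), (n : ℝ) / ((n : ℝ) - 4 * j) :=
          Finset.sum_le_sum fun k _ => Su1_term_bound n j k hn hodd hj'
      _ = ((n / 4 : ℕ) + 1 : ℝ) * ((n : ℝ) / ((n : ℝ) - 4 * j)) := by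
          rw [Finset.sum_const, Finset.card_range, nsmul_eq_mul]
          push_cast
          ring
  have hlog2 : (0.6931471803 : ℝ) < Real.log 2 := Real.log_two_gt_d9
  rcases eq_or_ne n 3 with rfl | h3
  · norm_num [Finset.sum_range_succ] at hS ⊢
    have hl : Real.log 2 ≤ Real.log 3 := Real.log_le_log (by norm_num) (by norm_num)
    nlinarith
  rcases eq_or_ne n 5 with rfl | h5
  · have hl5 : (1.3862 : ℝ) ≤ Real.log 5 := by
      have h4 : Real.log (4 : ℝ) = 2 * Real.log 2 := by
        rw [show (4 : ℝ) = 2 ^ 2 by norm_num, Real.log_pow]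
        push_cast; ring
      have := Real.log_le_log (by norm_num : (0:ℝ) < 4) (by norm_num : (4:ℝ) ≤ 5)
      rw [h4] at this
      linarith
    have ht10 : 1 / |Real.cos (2 * Real.pi * (1 : ℕ) / (5 : ℕ)) -
        Real.cos (2 * Real.pi * (0 : ℕ) / (5 : ℕ)) + 1| ≤ (5 : ℝ) := by
      have := Su1_term_bound 5 1 0 (by norm_num) ⟨2, by norm_num⟩ (by norm_num)
      norm_num at this ⊢
      convert this using 4 <;> norm_num
    have ht01 : 1 / |Real.cos (2 * Real.pi * (0 : ℕ) / (5 : ℕ)) -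
        Real.cos (2 * Real.pi * (1 : ℕ) / (5 : ℕ)) + 1| ≤ (1 : ℝ) := by
      have hc : Real.cos (2 * Real.pi * (1 : ℕ) / (5 : ℕ)) ≤ 1 := Real.cos_le_one _
      have hc2 : (-1 : ℝ) ≤ Real.cos (2 * Real.pi * (1 : ℕ) / (5 : ℕ)) := Real.neg_one_le_cos _
      have h0 : Real.cos (2 * Real.pi * (0 : ℕ) / (5 : ℕ)) = 1 := by
        norm_num
      rw [h0]
      rw [abs_of_pos (by linarith)]
      rw [div_le_one (by linarith)]
      linarith
    norm_num [Finset.sum_range_succ] at ht10 ht01 ⊢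
    nlinarith [ht10, ht01]
  rcases eq_or_ne n 7 with rfl | h7
  · norm_num [Finset.sum_range_succ] at hS ⊢
    have hl : Real.log 2 ≤ Real.log 7 := Real.log_le_log (by norm_num) (by norm_num)
    nlinarith
  have hn9 : 9 ≤ n := by
    rcases hodd with ⟨m, hm⟩
    omega
  have hH := Su1_Hsum_bound n hn9 hodd
  have hnum := Su1_numeric n hn9 hodd
  have hq1 : (0 : ℝ) ≤ ((n / 4 : ℕ) : ℝ) + 1 := by positivity
  have hfac : ∑ j ∈ Finset.range (n / 4 + 1), (n : ℝ) / ((n : ℝ) - 4 * j)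
      = (n : ℝ) * ∑ j ∈ Finset.range (n / 4 + 1), 1 / ((n : ℝ) - 4 * j) := by
    rw [Finset.mul_sum]
    apply Finset.sum_congr rfl
    intro j hj
    rw [mul_one_div]
  rw [hfac] at hS
  have hlogq0 : 0 ≤ Real.log (n / 4 : ℕ) := by
    apply Real.log_nonneg
    have : 2 ≤ n / 4 := by omega
    exact_mod_cast this.trans' (by norm_num)
  have hchain : (3 / 2 : ℝ) * (((n / 4 : ℕ) + 1 : ℝ) * ((n : ℝ) *
      ∑ j ∈ Finset.range (n / 4 + 1), 1 / ((n : ℝ) - 4 * j)))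
      ≤ (3 / 8) * (n : ℝ) * (((n / 4 : ℕ) + 1 : ℝ) * (5 + Real.log (n / 4 : ℕ))) := by
    have h1 : ((n / 4 : ℕ) + 1 : ℝ) * ((n : ℝ) *
        ∑ j ∈ Finset.range (n / 4 + 1), 1 / ((n : ℝ) - 4 * j))
        ≤ ((n / 4 : ℕ) + 1 : ℝ) * ((n : ℝ) * (5 / 4 + Real.log (n / 4 : ℕ) / 4)) := by
      apply mul_le_mul_of_nonneg_left _ hq1
      exact mul_le_mul_of_nonneg_left hH hn0.le
    nlinarith [h1]
  have hfin : (3 / 8 : ℝ) * (n : ℝ) * (((n / 4 : ℕ) + 1 : ℝ) * (5 + Real.log (n / 4 : ℕ)))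
      ≤ (3 / 8) * (n : ℝ) ^ 2 * Real.log n := by
    have := mul_le_mul_of_nonneg_left hnum (show (0:ℝ) ≤ 3 / 8 * n by positivity)
    nlinarith
  calc (3 / 2 : ℝ) * ∑ j ∈ Finset.range (n / 4 + 1), ∑ k ∈ Finset.range (n / 4 + 1),
        1 / |Real.cos (2 * Real.pi * j / n) - Real.cos (2 * Real.pi * k / n) + 1|
      ≤ (3 / 2) * (((n / 4 : ℕ) + 1 : ℝ) * ((n : ℝ) *
        ∑ j ∈ Finset.range (n / 4 + 1), 1 / ((n : ℝ) - 4 * j))) := by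
        apply mul_le_mul_of_nonneg_left hS (by norm_num)
    _ ≤ (3 / 8) * (n : ℝ) * (((n / 4 : ℕ) + 1 : ℝ) * (5 + Real.log (n / 4 : ℕ))) := hchain
    _ ≤ (3 / 8) * (n : ℝ) ^ 2 * Real.log n := hfin
end
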